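/- arXiv:2605.26547 — 6 statements merged into one kernel-verified Lean document; each statement's English description precedes it below -/
import Mathlib

section
/- Let f: ℝ^d → ℝ be differentiable with L-Lipschitz gradient. Fix x_t ∈ ℝ^d, a nonzero vector u_t ∈ ℝ^d, a stepsize η_t > 0, and α > 0. Define β_t = (f(x_t + α u_t) − f(x_t − α u_t))/(2α) − u_t^⊤ ∇f(x_t), g(x_t) = ((f(x_t + α u_t) − f(x_t − α u_t))/(2α)) u_t, and x_{t+1} = x_t − η_t g(x_t). Then f(x_{t+1}) ≤ f(x_t) − (η_t (u_t^⊤ ∇f(x_t))²)/2 + L η_t² ‖u_t‖² (u_t^⊤ ∇f(x_t))² + Δ_{α,t}, where Δ_{α,t} = (η_t β_t²)/2 + L η_t² β_t² ‖u_t‖². -/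
open scoped RealInnerProductSpace

/-! The step is `x - η c u` with `c = a + β`, `a = ⟪u, ∇f x⟫`, so the descent lemma
`f (x + v) ≤ f x + ⟪∇f x, v⟫ + L/2 ‖v‖²` bounds `f` after the step. The gap between that
bound and the claimed one is `η (a + β)² / 2 + L η² ‖u‖² (a - β)² / 2 ≥ 0`. -/

lemma image_one_le_of_hasDerivAt_le_linear {φ φ' : ℝ → ℝ} {K : ℝ}
    (hφ : ∀ t, HasDerivAt φ (φ' t) t) (hle : ∀ t ∈ Set.Ioo (0 : ℝ) 1, φ' t ≤ φ' 0 + K * t) :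
    φ 1 ≤ φ 0 + φ' 0 + K / 2 := by
  set ψ : ℝ → ℝ := fun t => φ t - φ' 0 * t - K / 2 * t ^ 2
  have hψ : ∀ t, HasDerivAt ψ (φ' t - φ' 0 - K * t) t := fun t => by
    refine (((hφ t).sub ((hasDerivAt_id t).const_mul (φ' 0))).sub
      ((hasDerivAt_pow 2 t).const_mul (K / 2))).congr_deriv ?_
    norm_num
    ring
  have hanti : AntitoneOn ψ (Set.Icc 0 1) := by
    refine antitoneOn_of_hasDerivWithinAt_nonpos (convex_Icc 0 1)
      (fun t _ => (hψ t).continuousAt.continuousWithinAt)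
      (fun t _ => (hψ t).hasDerivWithinAt) fun t ht => ?_
    rw [interior_Icc] at ht
    linarith [hle t ht]
  have h01 := hanti (by norm_num) (by norm_num) zero_le_one
  simp only [ψ] at h01
  linarith

section DescentLemma

variable {E : Type*} [NormedAddCommGroup E] [InnerProductSpace ℝ E] [CompleteSpace E]

lemma hasDerivAt_comp_add_smul_of_differentiable {f : E → ℝ} (hdiff : Differentiable ℝ f)
    (x v : E) (t : ℝ) :
    HasDerivAt (fun s : ℝ => f (x + s • v)) ⟪gradient f (x + t • v), v⟫ t := by
  have hline : HasDerivAt (fun s : ℝ => x + s • v) v t := by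
    simpa using ((hasDerivAt_id t).smul_const v).const_add x
  simpa [Function.comp_def] using
    (hdiff (x + t • v)).hasGradientAt.hasFDerivAt.comp_hasDerivAt t hline

lemma inner_gradient_add_smul_sub_le {f : E → ℝ} {L : ℝ}
    (hlip : ∀ x y, ‖gradient f y - gradient f x‖ ≤ L * ‖y - x‖)
    (x v : E) {t : ℝ} (ht : 0 ≤ t) :
    ⟪gradient f (x + t • v) - gradient f x, v⟫ ≤ L * t * ‖v‖ ^ 2 :=
  calc ⟪gradient f (x + t • v) - gradient f x, v⟫
      ≤ ‖gradient f (x + t • v) - gradient f x‖ * ‖v‖ := real_inner_le_norm _ _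
    _ ≤ L * ‖(x + t • v) - x‖ * ‖v‖ := by gcongr; exact hlip x _
    _ = L * t * ‖v‖ ^ 2 := by
      rw [add_sub_cancel_left, norm_smul, Real.norm_of_nonneg ht]
      ring

theorem le_add_inner_gradient_add_sq {f : E → ℝ} {L : ℝ} (hdiff : Differentiable ℝ f)
    (hlip : ∀ x y, ‖gradient f y - gradient f x‖ ≤ L * ‖y - x‖) (x v : E) :
    f (x + v) ≤ f x + ⟪gradient f x, v⟫ + L / 2 * ‖v‖ ^ 2 := by
  have h := image_one_le_of_hasDerivAt_le_linear (K := L * ‖v‖ ^ 2)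
    (hasDerivAt_comp_add_smul_of_differentiable hdiff x v) fun t ht => by
      have := inner_gradient_add_smul_sub_le hlip x v ht.1.le
      rw [inner_sub_left] at this
      simp only [zero_smul, add_zero]
      linarith
  simp only [one_smul, zero_smul, add_zero] at h
  linarith

end DescentLemma

theorem one_step_descent_general
    {d : ℕ}
    (f : EuclideanSpace ℝ (Fin d) → ℝ) (L : ℝ) (hL : 0 < L)
    (hdiff : Differentiable ℝ f)
    (hlip : ∀ x y, ‖gradient f y - gradient f x‖ ≤ L * ‖y - x‖)
    (xt ut : EuclideanSpace ℝ (Fin d))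
    (ηt α : ℝ) (hη : 0 < ηt)
    (βt : ℝ)
    (hβ : βt = (f (xt + α • ut) - f (xt - α • ut)) / (2 * α) - ⟪ut, gradient f xt⟫)
    (g : EuclideanSpace ℝ (Fin d))
    (hg : g = ((f (xt + α • ut) - f (xt - α • ut)) / (2 * α)) • ut)
    (xt1 : EuclideanSpace ℝ (Fin d)) (hx1 : xt1 = xt - ηt • g)
    (Δαt : ℝ) (hΔ : Δαt = ηt * βt ^ 2 / 2 + L * ηt ^ 2 * βt ^ 2 * ‖ut‖ ^ 2) :
    f xt1 ≤ f xt - ηt * ⟪ut, gradient f xt⟫ ^ 2 / 2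
      + L * ηt ^ 2 * ‖ut‖ ^ 2 * ⟪ut, gradient f xt⟫ ^ 2 + Δαt := by
  set a : ℝ := ⟪ut, gradient f xt⟫
  set c : ℝ := (f (xt + α • ut) - f (xt - α • ut)) / (2 * α)
  have hc : c = a + βt := by rw [hβ]; ring
  have hstep : xt1 = xt + (-(ηt * c)) • ut := by
    rw [hx1, hg, smul_smul]
    module
  have hdesc := le_add_inner_gradient_add_sq hdiff hlip xt ((-(ηt * c)) • ut)
  rw [← hstep, real_inner_smul_right, real_inner_comm, norm_smul, mul_pow, norm_neg,
    Real.norm_eq_abs, sq_abs] at hdesc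
  have hsplit : 0 ≤ ηt * (a + βt) ^ 2 / 2 + L * ηt ^ 2 * ‖ut‖ ^ 2 * (a - βt) ^ 2 / 2 := by
    positivity
  rw [hc] at hdesc
  rw [hΔ]
  linear_combination hdesc + hsplit

/-- **One-step descent for smooth objectives (Lemma 1 / stmt 6).**
If `f` is differentiable with `L`-Lipschitz gradient, then one step of the two-point
zeroth-order update satisfies the stated descent inequality. -/
theorem one_step_descent
    {d : ℕ} (hd : 1 ≤ d)
    (f : EuclideanSpace ℝ (Fin d) → ℝ) (L : ℝ) (hL : 0 < L)
    (hdiff : Differentiable ℝ f)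
    (hlip : ∀ x y, ‖gradient f y - gradient f x‖ ≤ L * ‖y - x‖)
    (xt ut : EuclideanSpace ℝ (Fin d)) (hut : ut ≠ 0)
    (ηt α : ℝ) (hη : 0 < ηt) (hα : 0 < α)
    (βt : ℝ)
    (hβ : βt = (f (xt + α • ut) - f (xt - α • ut)) / (2 * α) - ⟪ut, gradient f xt⟫)
    (g : EuclideanSpace ℝ (Fin d))
    (hg : g = ((f (xt + α • ut) - f (xt - α • ut)) / (2 * α)) • ut)
    (xt1 : EuclideanSpace ℝ (Fin d)) (hx1 : xt1 = xt - ηt • g)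
    (Δαt : ℝ) (hΔ : Δαt = ηt * βt ^ 2 / 2 + L * ηt ^ 2 * βt ^ 2 * ‖ut‖ ^ 2) :
    f xt1 ≤ f xt - ηt * ⟪ut, gradient f xt⟫ ^ 2 / 2
      + L * ηt ^ 2 * ‖ut‖ ^ 2 * ⟪ut, gradient f xt⟫ ^ 2 + Δαt :=
  one_step_descent_general f L hL hdiff hlip xt ut ηt α hη βt hβ g hg xt1 hx1 Δαt hΔ
end

section
/- Let f: ℝ^d → ℝ be differentiable with L-Lipschitz gradient and μ-strongly convex with minimizer x*. Let x_0 ∈ ℝ^d, α > 0, and let u_0, …, u_{T−1} ∈ ℝ^d be nonzero vectors. Define the iterates x_{t+1} = x_t − η_t g(x_t) with η_t = 1/(4L‖u_t‖²), g(x_t) = ((f(x_t + α u_t) − f(x_t − α u_t))/(2α)) u_t, β_t = (f(x_t + α u_t) − f(x_t − α u_t))/(2α) − u_t^⊤ ∇f(x_t), and Δ_{α,t} = (η_t β_t²)/2 + L η_t² β_t² ‖u_t‖². For each t, set ζ_t = (u_t^⊤ ∇f(x_t))² / (‖u_t‖² ‖∇f(x_t)‖²) if ∇f(x_t) ≠ 0,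 and ζ_t = (u_t^⊤ a_t)²/‖u_t‖² for an arbitrary unit vector a_t if ∇f(x_t) = 0. Then f(x_T) − f(x*) ≤ exp( −(μ/(8L)) Σ_{t=0}^{T−1} ζ_t ) · (f(x_0) − f(x*)) + Σ_{k=0}^{T−1} exp( −(μ/(8L)) Σ_{t=k+1}^{T−1} ζ_t ) · Δ_{α,k}. -/
/-!
Write `p = ⟪u, ∇f x⟫`. The update moves along `u` by `η (p + β)`, so the descent lemma with
`η = 1 / (4 L ‖u‖²)` gives `f x⁺ ≤ f x - η p² / 2 + η β² / 2`. By strong convexity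
`‖∇f x‖² ≥ 2 μ (f x - f x*)`, and `p² = ζ ‖u‖² ‖∇f x‖²`, so the progress term `η p² / 2` is at
least `μ ζ / (8 L) · (f x - f x*)`. Hence the gap contracts by `1 - μ ζ / (8 L) ≤ exp (-μ ζ / (8 L))`
up to `Δ` in each step, and the discrete Grönwall inequality unrolls the recursion.
-/

open Real Finset
open scoped RealInnerProductSpace Gradient

section SmoothOptimization

variable {E : Type*} [NormedAddCommGroup E] [InnerProductSpace ℝ E] [CompleteSpace E]
  {f : E → ℝ}

lemma hasDerivAt_comp_add_smul {x v : E} {s : ℝ} (hf : DifferentiableAt ℝ f (x + s • v)) :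
    HasDerivAt (fun s : ℝ => f (x + s • v)) ⟪∇ f (x + s • v), v⟫ s := by
  have hline : HasDerivAt (fun s : ℝ => x + s • v) v s := by
    simpa using ((hasDerivAt_id s).smul_const v).const_add x
  rw [inner_gradient_left]
  exact hf.hasFDerivAt.comp_hasDerivAt s hline

lemma image_add_le_of_lipschitz_gradient {L : ℝ} (hdiff : Differentiable ℝ f)
    (hlip : ∀ x y, ‖∇ f y - ∇ f x‖ ≤ L * ‖y - x‖) (x v : E) :
    f (x + v) ≤ f x + ⟪∇ f x, v⟫ + L / 2 * ‖v‖ ^ 2 := by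
  have hφ : ∀ s : ℝ, HasDerivAt (fun s : ℝ => f (x + s • v)) ⟪∇ f (x + s • v), v⟫ s :=
    fun s => hasDerivAt_comp_add_smul (hdiff _)
  have hB : ∀ s : ℝ, HasDerivAt (fun s : ℝ => f x + s * ⟪∇ f x, v⟫ + L / 2 * s ^ 2 * ‖v‖ ^ 2)
      (⟪∇ f x, v⟫ + L * s * ‖v‖ ^ 2) s := by
    intro s
    refine ((((hasDerivAt_id' s).mul_const ⟪∇ f x, v⟫).const_add (f x)).add
      (((hasDerivAt_pow 2 s).const_mul (L / 2)).mul_const (‖v‖ ^ 2))).congr_deriv (by ring)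
  have hslope : ∀ s ∈ Set.Ico (0 : ℝ) 1, ⟪∇ f (x + s • v), v⟫ ≤ ⟪∇ f x, v⟫ + L * s * ‖v‖ ^ 2 := by
    rintro s ⟨hs, -⟩
    have hgrad := hlip x (x + s • v)
    rw [add_sub_cancel_left, norm_smul, norm_of_nonneg hs] at hgrad
    calc ⟪∇ f (x + s • v), v⟫ = ⟪∇ f x, v⟫ + ⟪∇ f (x + s • v) - ∇ f x, v⟫ := by
          rw [inner_sub_left]; ring
      _ ≤ ⟪∇ f x, v⟫ + L * (s * ‖v‖) * ‖v‖ := by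
          gcongr
          exact (real_inner_le_norm _ _).trans (by gcongr)
      _ = ⟪∇ f x, v⟫ + L * s * ‖v‖ ^ 2 := by ring
  have hcomp := image_le_of_deriv_right_le_deriv_boundary
    (fun s _ => (hφ s).continuousAt.continuousWithinAt) (fun s _ => (hφ s).hasDerivWithinAt)
    (by simp) (fun s _ => (hB s).continuousAt.continuousWithinAt)
    (fun s _ => (hB s).hasDerivWithinAt) hslope (b := 1) (Set.right_mem_Icc.2 zero_le_one)
  simpa using hcomp

lemma two_mul_sub_le_norm_gradient_sq {μ : ℝ} (hμ : 0 < μ)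
    (hsc : ∀ x y, f x + ⟪∇ f x, y - x⟫ + μ / 2 * ‖y - x‖ ^ 2 ≤ f y) (y z : E) :
    2 * μ * (f y - f z) ≤ ‖∇ f y‖ ^ 2 := by
  have hsq : 0 ≤ ‖∇ f y + μ • (z - y)‖ ^ 2 := sq_nonneg _
  rw [norm_add_sq_real, real_inner_smul_right, norm_smul, norm_of_nonneg hμ.le, mul_pow] at hsq
  nlinarith [hsc y z]

lemma image_sub_smul_le_of_lipschitz_gradient {L η : ℝ} (hdiff : Differentiable ℝ f)
    (hlip : ∀ x y, ‖∇ f y - ∇ f x‖ ≤ L * ‖y - x‖) {u : E} (hη : 0 ≤ η)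
    (hηL : 4 * L * η * ‖u‖ ^ 2 ≤ 1) (x : E) (b : ℝ) :
    f (x - η • ((b + ⟪u, ∇ f x⟫) • u)) ≤ f x - η / 2 * ⟪u, ∇ f x⟫ ^ 2 + η * b ^ 2 / 2 := by
  set p := ⟪u, ∇ f x⟫
  have hdesc := image_add_le_of_lipschitz_gradient hdiff hlip x ((-(η * (b + p))) • u)
  rw [real_inner_smul_right, real_inner_comm u, norm_smul, Real.norm_eq_abs, mul_pow, sq_abs,
    neg_sq, neg_smul, ← sub_eq_add_neg, ← smul_smul] at hdesc
  have hquad : L / 2 * (η ^ 2 * (b + p) ^ 2 * ‖u‖ ^ 2) ≤ η * (b + p) ^ 2 / 8 := by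
    have := mul_le_mul_of_nonneg_left hηL (mul_nonneg hη (sq_nonneg (b + p)))
    nlinarith
  -- `-η (b + p) p + η (b + p)² / 8 = -η p² / 2 + η b² / 2 - 3 η (b + p)² / 8`
  nlinarith [mul_nonneg hη (sq_nonneg (b + p))]

lemma mul_sub_le_sq_inner_gradient {L μ ζ : ℝ} (hL : 0 < L) (hμ : 0 < μ)
    (hsc : ∀ x y, f x + ⟪∇ f x, y - x⟫ + μ / 2 * ‖y - x‖ ^ 2 ≤ f y) {x xstar u : E}
    (hmin : f xstar ≤ f x) (hu : u ≠ 0)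
    (hζ : ∇ f x ≠ 0 → ζ = ⟪u, ∇ f x⟫ ^ 2 / (‖u‖ ^ 2 * ‖∇ f x‖ ^ 2)) :
    μ / (8 * L) * ζ * (f x - f xstar) ≤ ⟪u, ∇ f x⟫ ^ 2 / (8 * L * ‖u‖ ^ 2) := by
  have hPL := two_mul_sub_le_norm_gradient_sq hμ hsc x xstar
  have hgap : 0 ≤ f x - f xstar := sub_nonneg.2 hmin
  by_cases hg : ∇ f x = 0
  · have hzero : f x - f xstar = 0 := by
      rw [hg, norm_zero] at hPL
      nlinarith
    rw [hzero, mul_zero]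
    positivity
  · have hζ_nonneg : 0 ≤ ζ := by rw [hζ hg]; positivity
    have hp : ⟪u, ∇ f x⟫ ^ 2 / (8 * L * ‖u‖ ^ 2) = ζ * ‖∇ f x‖ ^ 2 / (8 * L) := by
      rw [hζ hg]; field_simp
    rw [hp, div_mul_eq_mul_div, div_mul_eq_mul_div, div_le_div_iff_of_pos_right (by positivity)]
    nlinarith [mul_le_mul_of_nonneg_left hPL hζ_nonneg, mul_nonneg hζ_nonneg hgap]

lemma sub_le_exp_mul_sub_add_of_normalized_step {L μ η ζ : ℝ} (hL : 0 < L) (hμ : 0 < μ)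
    (hdiff : Differentiable ℝ f) (hlip : ∀ x y, ‖∇ f y - ∇ f x‖ ≤ L * ‖y - x‖)
    (hsc : ∀ x y, f x + ⟪∇ f x, y - x⟫ + μ / 2 * ‖y - x‖ ^ 2 ≤ f y) {x xstar u : E}
    (hmin : f xstar ≤ f x) (hu : u ≠ 0) (hη : η = 1 / (4 * L * ‖u‖ ^ 2))
    (hζ : ∇ f x ≠ 0 → ζ = ⟪u, ∇ f x⟫ ^ 2 / (‖u‖ ^ 2 * ‖∇ f x‖ ^ 2)) (b : ℝ) :
    f (x - η • ((b + ⟪u, ∇ f x⟫) • u)) - f xstar ≤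
      exp (-(μ / (8 * L)) * ζ) * (f x - f xstar) + η * b ^ 2 / 2 := by
  have hdesc := image_sub_smul_le_of_lipschitz_gradient hdiff hlip (η := η) (u := u)
    (by rw [hη]; positivity) (le_of_eq (by rw [hη]; field_simp)) x b
  have hprogress : η / 2 * ⟪u, ∇ f x⟫ ^ 2 = ⟪u, ∇ f x⟫ ^ 2 / (8 * L * ‖u‖ ^ 2) := by
    rw [hη]; field_simp; ring
  have hcontract : (1 - μ / (8 * L) * ζ) * (f x - f xstar) ≤
      exp (-(μ / (8 * L)) * ζ) * (f x - f xstar) :=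
    mul_le_mul_of_nonneg_right (by linarith [add_one_le_exp (-(μ / (8 * L)) * ζ)])
      (sub_nonneg.2 hmin)
  nlinarith [mul_sub_le_sq_inner_gradient hL hμ hsc hmin hu hζ]

end SmoothOptimization

theorem pathwise_strongly_convex_recursion_general
    {d : ℕ}
    (f : EuclideanSpace ℝ (Fin d) → ℝ) (L μ : ℝ) (hL : 0 < L) (hμ : 0 < μ)
    (hdiff : Differentiable ℝ f)
    (hlip : ∀ x y, ‖gradient f y - gradient f x‖ ≤ L * ‖y - x‖)
    (hsc : ∀ x y, f x + ⟪gradient f x, y - x⟫ + μ / 2 * ‖y - x‖ ^ 2 ≤ f y)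
    (xstar : EuclideanSpace ℝ (Fin d)) (hmin : ∀ y, f xstar ≤ f y)
    (T : ℕ) (α : ℝ)
    (u : ℕ → EuclideanSpace ℝ (Fin d)) (hu : ∀ t, u t ≠ 0)
    (x : ℕ → EuclideanSpace ℝ (Fin d)) (x₀ : EuclideanSpace ℝ (Fin d))
    (hx0 : x 0 = x₀)
    (η : ℕ → ℝ) (hη : ∀ t, η t = 1 / (4 * L * ‖u t‖ ^ 2))
    (hstep : ∀ t, x (t + 1) = x t -
      η t • (((f (x t + α • u t) - f (x t - α • u t)) / (2 * α)) • u t))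
    (β : ℕ → ℝ)
    (hβ : ∀ t, β t = (f (x t + α • u t) - f (x t - α • u t)) / (2 * α)
      - ⟪u t, gradient f (x t)⟫)
    (Δα : ℕ → ℝ)
    (hΔ : ∀ t, Δα t = η t * β t ^ 2 / 2 + L * η t ^ 2 * β t ^ 2 * ‖u t‖ ^ 2)
    (ζ : ℕ → ℝ)
    (hζ₁ : ∀ t, gradient f (x t) ≠ 0 →
      ζ t = ⟪u t, gradient f (x t)⟫ ^ 2 / (‖u t‖ ^ 2 * ‖gradient f (x t)‖ ^ 2)) :
    f (x T) - f xstar ≤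
      Real.exp (-(μ / (8 * L)) * ∑ t ∈ Finset.range T, ζ t) * (f x₀ - f xstar)
      + ∑ k ∈ Finset.range T,
          Real.exp (-(μ / (8 * L)) * ∑ t ∈ Finset.Ico (k + 1) T, ζ t) * Δα k := by
  have hstep' : ∀ t, x (t + 1) = x t - η t • ((β t + ⟪u t, ∇ f (x t)⟫) • u t) := fun t => by
    rw [hstep t, hβ t, sub_add_cancel]
  have hΔ_ge : ∀ t, η t * β t ^ 2 / 2 ≤ Δα t := fun t => by
    rw [hΔ t]
    have : 0 ≤ L * η t ^ 2 * β t ^ 2 * ‖u t‖ ^ 2 := by positivity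
    linarith
  have hone_step : ∀ t, f (x (t + 1)) - f xstar ≤
      exp (-(μ / (8 * L)) * ζ t) * (f (x t) - f xstar) + Δα t := fun t => by
    rw [hstep' t]
    exact (sub_le_exp_mul_sub_add_of_normalized_step hL hμ hdiff hlip hsc (hmin _) (hu t)
      (hη t) (hζ₁ t) (β t)).trans (add_le_add_right (hΔ_ge t) _)
  have hexp_sum : ∀ s : Finset ℕ,
      ∏ t ∈ s, exp (-(μ / (8 * L)) * ζ t) = exp (-(μ / (8 * L)) * ∑ t ∈ s, ζ t) := fun s => by
    rw [mul_sum, exp_sum]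
  have hgronwall := discrete_gronwall_prod_general (u := fun t => f (x t) - f xstar)
    (fun t _ => hone_step t) (fun t _ => (exp_pos _).le) (Nat.zero_le T)
  simp only [hexp_sum, ← range_eq_Ico, hx0] at hgronwall
  simpa only [mul_comm] using hgronwall

/-- **Pathwise contraction for strongly convex objectives (Lemma `dec2` / stmt 7).**
For a deterministic trajectory of the normalized two-point zeroth-order method on an
`L`-smooth, `μ`-strongly convex `f` with minimizer `x*`, the optimality gap at time `T`
is controlled by accumulated Beta-type projections `ζ_t` and smoothing errors `Δ_{α,t}`. -/
theorem pathwise_strongly_convex_recursion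
    {d : ℕ} (hd : 1 ≤ d)
    (f : EuclideanSpace ℝ (Fin d) → ℝ) (L μ : ℝ) (hL : 0 < L) (hμ : 0 < μ)
    (hdiff : Differentiable ℝ f)
    (hlip : ∀ x y, ‖gradient f y - gradient f x‖ ≤ L * ‖y - x‖)
    (hsc : ∀ x y, f x + ⟪gradient f x, y - x⟫ + μ / 2 * ‖y - x‖ ^ 2 ≤ f y)
    (xstar : EuclideanSpace ℝ (Fin d)) (hmin : ∀ y, f xstar ≤ f y)
    (T : ℕ) (α : ℝ) (hα : 0 < α)
    (u : ℕ → EuclideanSpace ℝ (Fin d)) (hu : ∀ t, u t ≠ 0)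
    (x : ℕ → EuclideanSpace ℝ (Fin d)) (x₀ : EuclideanSpace ℝ (Fin d))
    (hx0 : x 0 = x₀)
    (η : ℕ → ℝ) (hη : ∀ t, η t = 1 / (4 * L * ‖u t‖ ^ 2))
    (hstep : ∀ t, x (t + 1) = x t -
      η t • (((f (x t + α • u t) - f (x t - α • u t)) / (2 * α)) • u t))
    (β : ℕ → ℝ)
    (hβ : ∀ t, β t = (f (x t + α • u t) - f (x t - α • u t)) / (2 * α)
      - ⟪u t, gradient f (x t)⟫)
    (Δα : ℕ → ℝ)
    (hΔ : ∀ t, Δα t = η t * β t ^ 2 / 2 + L * η t ^ 2 * β t ^ 2 * ‖u t‖ ^ 2)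
    (a : ℕ → EuclideanSpace ℝ (Fin d)) (ha : ∀ t, ‖a t‖ = 1)
    (ζ : ℕ → ℝ)
    (hζ₁ : ∀ t, gradient f (x t) ≠ 0 →
      ζ t = ⟪u t, gradient f (x t)⟫ ^ 2 / (‖u t‖ ^ 2 * ‖gradient f (x t)‖ ^ 2))
    (hζ₂ : ∀ t, gradient f (x t) = 0 → ζ t = ⟪u t, a t⟫ ^ 2 / ‖u t‖ ^ 2) :
    f (x T) - f xstar ≤
      Real.exp (-(μ / (8 * L)) * ∑ t ∈ Finset.range T, ζ t) * (f x₀ - f xstar)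
      + ∑ k ∈ Finset.range T,
          Real.exp (-(μ / (8 * L)) * ∑ t ∈ Finset.Ico (k + 1) T, ζ t) * Δα k :=
  pathwise_strongly_convex_recursion_general f L μ hL hμ hdiff hlip hsc xstar hmin T α u hu x x₀ hx0
    η hη hstep β hβ Δα hΔ ζ hζ₁
end

section
/- Let f: ℝ^d → ℝ be differentiable with L-Lipschitz gradient, let u ∈ ℝ^d be nonzero, α > 0, η = 1/(4L‖u‖²), and β = (f(x + αu) − f(x − αu))/(2α) − u^⊤∇f(x). Then Δ_α := (η β²)/2 + L η² β² ‖u‖² satisfies Δ_α ≤ L α² ‖u‖² / 16. -/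
/-! The fencing comparison of `t ↦ f (x + t • v) - f x - t • f' x v` with `(L / 2) t² ‖v‖²`
gives the descent bound `‖f y - f x - f' x (y - x)‖ ≤ (L / 2) ‖y - x‖²`. Applied at `x ± α u` and
subtracted, it bounds the central-difference error by `|β| ≤ L α ‖u‖² / 2`. Since
`η L ‖u‖² ≤ 1 / 4`, `Δ_α ≤ (3 / 4) η β² ≤ 3 L α² ‖u‖² / 64`. -/

open scoped RealInnerProductSpace

section Taylor

variable {E F : Type*} [NormedAddCommGroup E] [NormedSpace ℝ E]
  [NormedAddCommGroup F] [NormedSpace ℝ F] {f : E → F} {L : ℝ} {x : E}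

theorem norm_sub_sub_fderiv_apply_le (hf : Differentiable ℝ f)
    (hlip : ∀ y, ‖fderiv ℝ f y - fderiv ℝ f x‖ ≤ L * ‖y - x‖) (y : E) :
    ‖f y - f x - fderiv ℝ f x (y - x)‖ ≤ L / 2 * ‖y - x‖ ^ 2 := by
  set v := y - x
  set g : ℝ → F := fun t ↦ f (x + t • v) - f x - t • fderiv ℝ f x v
  have hg : ∀ t, HasDerivAt g (fderiv ℝ f (x + t • v) v - fderiv ℝ f x v) t := by
    intro t
    have hline : HasDerivAt (fun t : ℝ ↦ x + t • v) v t := by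
      simpa using ((hasDerivAt_id t).smul_const v).const_add x
    have := (((hf _).hasFDerivAt.comp_hasDerivAt t hline).sub_const (f x)).sub
      ((hasDerivAt_id t).smul_const (fderiv ℝ f x v))
    rwa [one_smul] at this
  have hB : ∀ t, HasDerivAt (fun t ↦ L / 2 * t ^ 2 * ‖v‖ ^ 2) (L * t * ‖v‖ ^ 2) t := by
    intro t
    exact (((hasDerivAt_pow 2 t).const_mul (L / 2)).mul_const (‖v‖ ^ 2)).congr_deriv
      (by push_cast; ring)
  have hbound : ∀ t ∈ Set.Ico (0 : ℝ) 1,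
      ‖fderiv ℝ f (x + t • v) v - fderiv ℝ f x v‖ ≤ L * t * ‖v‖ ^ 2 := by
    intro t ht
    calc ‖fderiv ℝ f (x + t • v) v - fderiv ℝ f x v‖
        = ‖(fderiv ℝ f (x + t • v) - fderiv ℝ f x) v‖ := rfl
      _ ≤ ‖fderiv ℝ f (x + t • v) - fderiv ℝ f x‖ * ‖v‖ := ContinuousLinearMap.le_opNorm _ _
      _ ≤ L * ‖x + t • v - x‖ * ‖v‖ := by gcongr; exact hlip _
      _ = L * t * ‖v‖ ^ 2 := by
        rw [add_sub_cancel_left, norm_smul, Real.norm_of_nonneg ht.1]; ring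
  have := image_norm_le_of_norm_deriv_right_le_deriv_boundary
    (fun t _ ↦ (hg t).continuousAt.continuousWithinAt) (fun t _ ↦ (hg t).hasDerivWithinAt)
    (by simp [g]) hB hbound (Set.right_mem_Icc.2 zero_le_one)
  simpa [g, v] using this

theorem norm_sub_sub_two_smul_fderiv_apply_le (hf : Differentiable ℝ f)
    (hlip : ∀ y, ‖fderiv ℝ f y - fderiv ℝ f x‖ ≤ L * ‖y - x‖) (h : E) :
    ‖f (x + h) - f (x - h) - (2 : ℝ) • fderiv ℝ f x h‖ ≤ L * ‖h‖ ^ 2 := by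
  have hplus := norm_sub_sub_fderiv_apply_le hf hlip (x + h)
  have hminus := norm_sub_sub_fderiv_apply_le hf hlip (x - h)
  rw [add_sub_cancel_left] at hplus
  rw [sub_sub_cancel_left, norm_neg, map_neg] at hminus
  calc ‖f (x + h) - f (x - h) - (2 : ℝ) • fderiv ℝ f x h‖
      = ‖(f (x + h) - f x - fderiv ℝ f x h) - (f (x - h) - f x - -fderiv ℝ f x h)‖ := by
        congr 1; rw [two_smul]; abel
    _ ≤ L / 2 * ‖h‖ ^ 2 + L / 2 * ‖h‖ ^ 2 := (norm_sub_le _ _).trans (add_le_add hplus hminus)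
    _ = L * ‖h‖ ^ 2 := by ring

end Taylor

section Gradient

variable {E : Type*} [NormedAddCommGroup E] [InnerProductSpace ℝ E] [CompleteSpace E]

theorem norm_gradient_sub_gradient (f : E → ℝ) (x y : E) :
    ‖gradient f y - gradient f x‖ = ‖fderiv ℝ f y - fderiv ℝ f x‖ := by
  rw [← (InnerProductSpace.toDual ℝ E).norm_map, map_sub, toDual_gradient, toDual_gradient]

theorem abs_centralDifference_sub_inner_gradient_le {f : E → ℝ} {L α : ℝ} {x : E}
    (hf : Differentiable ℝ f)
    (hlip : ∀ y, ‖gradient f y - gradient f x‖ ≤ L * ‖y - x‖) (u : E) (hα : 0 < α) :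
    |(f (x + α • u) - f (x - α • u)) / (2 * α) - ⟪u, gradient f x⟫| ≤ L * α * ‖u‖ ^ 2 / 2 := by
  have hlip' : ∀ y, ‖fderiv ℝ f y - fderiv ℝ f x‖ ≤ L * ‖y - x‖ := fun y ↦
    norm_gradient_sub_gradient f x y ▸ hlip y
  have hcentral := norm_sub_sub_two_smul_fderiv_apply_le hf hlip' (α • u)
  rw [map_smul, ← inner_gradient_left, real_inner_comm, norm_smul, Real.norm_of_nonneg hα.le,
    Real.norm_eq_abs, smul_eq_mul, smul_eq_mul] at hcentral
  have h2α : 0 < 2 * α := by positivity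
  rw [← mul_le_mul_iff_of_pos_left h2α, ← abs_of_pos h2α, ← abs_mul, abs_of_pos h2α]
  calc |2 * α * ((f (x + α • u) - f (x - α • u)) / (2 * α) - ⟪u, gradient f x⟫)|
      = |f (x + α • u) - f (x - α • u) - 2 * (α * ⟪u, gradient f x⟫)| := by
        congr 1; field_simp
    _ ≤ L * (α * ‖u‖) ^ 2 := hcentral
    _ = 2 * α * (L * α * ‖u‖ ^ 2 / 2) := by ring

end Gradient

theorem smoothingError_le {L s α β η : ℝ} (hL : 0 ≤ L) (hs : 0 ≤ s) (hη₀ : 0 ≤ η)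
    (hη : η * (L * s) ≤ 1 / 4) (hβ : |β| ≤ L * α * s / 2) :
    η * β ^ 2 / 2 + L * η ^ 2 * β ^ 2 * s ≤ L * α ^ 2 * s / 16 := by
  have hβsq : β ^ 2 ≤ L * α ^ 2 * s * (L * s) / 4 := by
    calc β ^ 2 = |β| ^ 2 := (sq_abs β).symm
      _ ≤ (L * α * s / 2) ^ 2 := pow_le_pow_left₀ (abs_nonneg β) hβ 2
      _ = L * α ^ 2 * s * (L * s) / 4 := by ring
  calc η * β ^ 2 / 2 + L * η ^ 2 * β ^ 2 * s = η * β ^ 2 * (1 / 2 + η * (L * s)) := by ring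
    _ ≤ η * (L * α ^ 2 * s * (L * s) / 4) * (1 / 2 + 1 / 4) := by gcongr
    _ = L * α ^ 2 * s * (η * (L * s)) * (3 / 16) := by ring
    _ ≤ L * α ^ 2 * s * (1 / 4) * (3 / 16) := by gcongr
    _ ≤ L * α ^ 2 * s / 16 := by
      have : 0 ≤ L * α ^ 2 * s := by positivity
      linarith

theorem delta_alpha_bound_general
    {d : ℕ}
    (f : EuclideanSpace ℝ (Fin d) → ℝ) (L : ℝ) (hL : 0 < L)
    (hdiff : Differentiable ℝ f)
    (hlip : ∀ x y, ‖gradient f y - gradient f x‖ ≤ L * ‖y - x‖)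
    (x u : EuclideanSpace ℝ (Fin d))
    (α η β Δα : ℝ) (hα : 0 < α)
    (hη : η = 1 / (4 * L * ‖u‖ ^ 2))
    (hβ : β = (f (x + α • u) - f (x - α • u)) / (2 * α) - ⟪u, gradient f x⟫)
    (hΔ : Δα = η * β ^ 2 / 2 + L * η ^ 2 * β ^ 2 * ‖u‖ ^ 2) :
    Δα ≤ L * α ^ 2 * ‖u‖ ^ 2 / 16 := by
  have hβ_le : |β| ≤ L * α * ‖u‖ ^ 2 / 2 :=
    hβ ▸ abs_centralDifference_sub_inner_gradient_le hdiff (hlip x) u hα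
  have hη_le : η * (L * ‖u‖ ^ 2) ≤ 1 / 4 := by
    calc η * (L * ‖u‖ ^ 2) = L * ‖u‖ ^ 2 / (L * ‖u‖ ^ 2) / 4 := by rw [hη]; ring
      _ ≤ 1 / 4 := by gcongr; exact div_self_le_one _
  exact hΔ ▸ smoothingError_le hL.le (by positivity) (hη ▸ by positivity) hη_le hβ_le

/-- **Bound on the finite-difference remainder (Lemma `delta_alpha` / stmt 8).**
With the normalized stepsize `η = 1/(4L‖u‖²)`, the smoothing error
`Δ_α = ηβ²/2 + Lη²β²‖u‖²` satisfies `Δ_α ≤ Lα²‖u‖²/16`. -/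
theorem delta_alpha_bound
    {d : ℕ} (hd : 1 ≤ d)
    (f : EuclideanSpace ℝ (Fin d) → ℝ) (L : ℝ) (hL : 0 < L)
    (hdiff : Differentiable ℝ f)
    (hlip : ∀ x y, ‖gradient f y - gradient f x‖ ≤ L * ‖y - x‖)
    (x u : EuclideanSpace ℝ (Fin d)) (hu : u ≠ 0)
    (α η β Δα : ℝ) (hα : 0 < α)
    (hη : η = 1 / (4 * L * ‖u‖ ^ 2))
    (hβ : β = (f (x + α • u) - f (x - α • u)) / (2 * α) - ⟪u, gradient f x⟫)
    (hΔ : Δα = η * β ^ 2 / 2 + L * η ^ 2 * β ^ 2 * ‖u‖ ^ 2) :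
    Δα ≤ L * α ^ 2 * ‖u‖ ^ 2 / 16 :=
  delta_alpha_bound_general f L hL hdiff hlip x u α η β Δα hα hη hβ hΔ
end

section
/- Let u_0, …, u_{T−1} be i.i.d. standard Gaussian vectors on ℝ^d. Fix 0 < δ_2 < 1, μ > 0, L > 0 with μ ≤ L, and for each integer 0 ≤ k ≤ T−1 define the deterministic weight ρ_k = min{ 1, exp( −(μ/(8L)) ( (T−k−501)/(2d) − (250/d)( log(1/δ_2) + log log(2(T−k)) ) ) ) }. Then for every 0 < δ_α < 1, with probability at least 1 − δ_α, Σ_{k=0}^{T−1} ρ_k ‖u_k‖² ≤ d ( 1004 + 1000 ( log(1/δ_2) + log log(2T) ) + 32 d L/μ + 3 log(1/δ_α) ). -/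
open MeasureTheory ProbabilityTheory Real Finset

/-!
Each `‖u_k‖²` is a sum of `d` squares of independent standard Gaussians, and for `0 ≤ a ≤ 1`,
`𝔼 exp (a Z² / 3) = (1 - 2a/3)^(-1/2) ≤ exp (2a/3)`. A Chernoff bound at the fixed parameter `1/3`
therefore gives `P (∑ aᵢ Zᵢ² ≥ 2 ∑ aᵢ + 3x) ≤ exp (-x)` for weights `aᵢ ∈ [0, 1]`.
The weights satisfy `ρ_k ≤ min 1 (exp (c (s - (T - k))))` with `c = μ / (16 L d)` and
`s = 501 + 500 (log (1/δ₂) + log log (2T))`, so `∑ ρ_k ≤ s + 1 + 1/c`: at most `⌈s⌉` of the terms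
are bounded by `1`, and the others by a geometric series of sum `1 / (exp c - 1) ≤ 1/c`.
-/

lemma inv_sqrt_one_sub_le_exp {u : ℝ} (hu0 : 0 ≤ u) (hu : u ≤ 2 / 3) :
    (√(1 - u))⁻¹ ≤ exp u := by
  have hexp : 1 + 2 * u + 2 * u ^ 2 ≤ exp (2 * u) := by
    have := quadratic_le_exp_of_nonneg (x := 2 * u) (by positivity)
    linarith
  have hsq : 1 ≤ (1 - u) * exp u ^ 2 := by
    rw [← exp_nat_mul]
    push_cast
    nlinarith [mul_le_mul_of_nonneg_left hexp (by linarith : 0 ≤ 1 - u)]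
  rw [inv_le_iff_one_le_mul₀ (sqrt_pos.mpr (by linarith)), mul_comm, ← sqrt_sq (exp_pos u).le,
    ← sqrt_mul (by linarith)]
  exact one_le_sqrt.mpr hsq

lemma integral_exp_mul_sq_gaussianReal {a : ℝ} (ha : a < 1 / 2) :
    ∫ x, exp (a * x ^ 2) ∂gaussianReal 0 1 = (√(1 - 2 * a))⁻¹ := by
  have hdensity : ∀ x : ℝ, gaussianPDFReal 0 1 x • exp (a * x ^ 2)
      = (√(2 * π))⁻¹ * exp (-(1 / 2 - a) * x ^ 2) := by
    intro x
    rw [gaussianPDFReal, smul_eq_mul, mul_assoc, ← exp_add]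
    push_cast
    ring_nf
  simp_rw [integral_gaussianReal_eq_integral_smul one_ne_zero, hdensity, integral_const_mul,
    integral_gaussian]
  rw [show π / (1 / 2 - a) = 2 * π / (1 - 2 * a) by field_simp, sqrt_div' _ (by linarith)]
  field_simp

lemma mgf_mul_sq_of_map_eq_gaussianReal {Ω : Type*} [MeasurableSpace Ω] {P : Measure Ω}
    {X : Ω → ℝ} (hX : P.map X = gaussianReal 0 1) {a t : ℝ} (h : t * a < 1 / 2) :
    mgf (fun ω => a * X ω ^ 2) P t = (√(1 - 2 * (t * a)))⁻¹ := by
  have hXm : AEMeasurable X P :=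
    AEMeasurable.of_map_ne_zero (hX ▸ IsProbabilityMeasure.ne_zero _)
  calc mgf (fun ω => a * X ω ^ 2) P t = ∫ x, exp (t * a * x ^ 2) ∂P.map X := by
        rw [integral_map hXm (by fun_prop)]
        simp only [mgf, mul_assoc]
    _ = _ := by rw [hX, integral_exp_mul_sq_gaussianReal h]

section WeightedChiSquare

variable {Ω ι : Type*} [MeasurableSpace Ω] {P : Measure Ω} [Fintype ι] {X : ι → Ω → ℝ}
  (hindep : iIndepFun X P) (hX : ∀ i, P.map (X i) = gaussianReal 0 1) {a : ι → ℝ}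
include hindep hX

lemma mgf_sum_mul_sq_of_iIndepFun {t : ℝ} (h : ∀ i, t * a i < 1 / 2) :
    mgf (fun ω => ∑ i, a i * X i ω ^ 2) P t = ∏ i, (√(1 - 2 * (t * a i)))⁻¹ := by
  have hmeas : ∀ i, AEMeasurable (fun ω => a i * X i ω ^ 2) P := fun i =>
    ((AEMeasurable.of_map_ne_zero (hX i ▸ IsProbabilityMeasure.ne_zero _)).pow_const 2).const_mul _
  have hindep' : iIndepFun (fun i ω => a i * X i ω ^ 2) P :=
    hindep.comp (fun i y => a i * y ^ 2) fun i => by fun_prop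
  rw [← Finset.sum_fn, hindep'.mgf_sum₀ hmeas]
  exact prod_congr rfl fun i _ => mgf_mul_sq_of_map_eq_gaussianReal (hX i) (h i)

lemma measureReal_le_sum_mul_sq_le (ha0 : ∀ i, 0 ≤ a i) (ha1 : ∀ i, a i ≤ 1) (x : ℝ) :
    P.real {ω | 2 * ∑ i, a i + 3 * x ≤ ∑ i, a i * X i ω ^ 2} ≤ exp (-x) := by
  have := hindep.isProbabilityMeasure
  have hmgf := mgf_sum_mul_sq_of_iIndepFun hindep hX (a := a) (t := 1 / 3)
    fun i => by linarith [ha1 i]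
  have hint : Integrable (fun ω => exp (1 / 3 * ∑ i, a i * X i ω ^ 2)) P := by
    refine mgf_pos_iff.mp ?_
    rw [hmgf]
    exact prod_pos fun i _ => inv_pos.mpr (sqrt_pos.mpr (by linarith [ha1 i]))
  have hmgf_le : mgf (fun ω => ∑ i, a i * X i ω ^ 2) P (1 / 3) ≤ exp (2 / 3 * ∑ i, a i) := by
    rw [hmgf, mul_sum, exp_sum]
    gcongr with i
    rw [show 1 - 2 * (1 / 3 * a i) = 1 - 2 / 3 * a i by ring]
    exact inv_sqrt_one_sub_le_exp (by linarith [ha0 i]) (by linarith [ha1 i])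
  calc P.real {ω | 2 * ∑ i, a i + 3 * x ≤ ∑ i, a i * X i ω ^ 2}
      ≤ exp (-(1 / 3) * (2 * ∑ i, a i + 3 * x))
          * mgf (fun ω => ∑ i, a i * X i ω ^ 2) P (1 / 3) :=
        measure_ge_le_exp_mul_mgf _ (by norm_num) hint
    _ ≤ exp (-(1 / 3) * (2 * ∑ i, a i + 3 * x)) * exp (2 / 3 * ∑ i, a i) := by gcongr
    _ = exp (-x) := by rw [← exp_add]; ring_nf

end WeightedChiSquare

lemma sum_range_exp_neg_mul_succ_le {c : ℝ} (hc : 0 < c) (n : ℕ) :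
    ∑ i ∈ range n, exp (-(c * (i + 1))) ≤ 1 / c := by
  have hr : exp (-c) < 1 := exp_lt_one_iff.mpr (by linarith)
  calc ∑ i ∈ range n, exp (-(c * (i + 1))) = exp (-c) * ∑ i ∈ range n, exp (-c) ^ i := by
        rw [mul_sum]
        refine sum_congr rfl fun i _ => ?_
        rw [← exp_nat_mul, ← exp_add]
        ring_nf
    _ ≤ exp (-c) * (1 - exp (-c))⁻¹ := by
        gcongr
        simpa using geom_sum_Ico_le_of_lt_one (m := 0) (exp_pos _).le hr
    _ = 1 / (exp c - 1) := by
        rw [exp_neg]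
        field_simp
    _ ≤ 1 / c := by
        gcongr
        linarith [add_one_le_exp c]

lemma sum_range_min_one_exp_le {c s : ℝ} (hc : 0 < c) (hs : 0 ≤ s) (n : ℕ) :
    ∑ j ∈ range n, min 1 (exp (c * (s - (j + 1)))) ≤ s + 1 + 1 / c := by
  set N := ⌈s⌉₊
  calc ∑ j ∈ range n, min 1 (exp (c * (s - (j + 1))))
      ≤ ∑ j ∈ range (N + n), min 1 (exp (c * (s - (j + 1)))) :=
        sum_le_sum_of_subset_of_nonneg (range_mono (by omega)) fun _ _ _ => by positivity
    _ = ∑ j ∈ range N, min 1 (exp (c * (s - (j + 1))))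
          + ∑ i ∈ range n, min 1 (exp (c * (s - ((N + i : ℕ) + 1)))) := sum_range_add _ _ _
    _ ≤ ∑ j ∈ range N, 1 + ∑ i ∈ range n, exp (-(c * (i + 1))) := by
        gcongr with j _ i
        · exact min_le_left _ _
        · refine (min_le_right _ _).trans (exp_le_exp.mpr ?_)
          have : s ≤ N := Nat.le_ceil s
          push_cast
          nlinarith
    _ ≤ s + 1 + 1 / c := by
        have := Nat.ceil_lt_add_one hs
        have := sum_range_exp_neg_mul_succ_le hc n
        simp only [sum_const, card_range, nsmul_eq_mul, mul_one]
        linarith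

lemma neg_one_le_log_log_two_mul (n : ℕ) : -1 ≤ log (log (2 * n)) := by
  rcases Nat.eq_zero_or_pos n with rfl | hn
  · simp
  have h2 : log 2 ≤ log (2 * n) := log_le_log two_pos (by
    have : (1 : ℝ) ≤ n := by exact_mod_cast hn
    linarith)
  have hlog2 := log_two_gt_d9
  have := one_sub_inv_le_log_of_pos (x := log (2 * n)) (by linarith)
  have : (log (2 * n))⁻¹ < 2 := by
    rw [inv_lt_comm₀ (by linarith) two_pos]; linarith
  linarith

lemma log_log_two_mul_le_log_log_two_mul {m n : ℝ} (hm : 1 ≤ m) (hmn : m ≤ n) :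
    log (log (2 * m)) ≤ log (log (2 * n)) :=
  log_le_log (log_pos (by linarith)) (log_le_log (by linarith) (by linarith))

lemma sum_weights_le {d T : ℕ} (hd : 1 ≤ d) {L μ δ₂ : ℝ} (hL : 0 < L) (hμ : 0 < μ)
    (hδ₂ : 0 < δ₂) (hδ₂1 : δ₂ < 1) {ρ : ℕ → ℝ}
    (hρ : ∀ k, k < T →
      ρ k = min 1 (exp (-(μ / (8 * L)) *
        (((T : ℝ) - k - 501) / (2 * d)
          - 250 / d * (log (1 / δ₂) + log (log (2 * ((T : ℝ) - k)))))))) :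
    ∑ k ∈ range T, ρ k ≤ 502 + 500 * (log (1 / δ₂) + log (log (2 * T))) + 16 * L * d / μ := by
  set A := log (1 / δ₂) + log (log (2 * T))
  set c := μ / (16 * L * d)
  have hd0 : (0 : ℝ) < d := by exact_mod_cast hd
  have hc : 0 < c := by positivity
  have hA : -1 ≤ A := by
    have := log_nonneg (one_le_one_div hδ₂ hδ₂1.le)
    linarith [neg_one_le_log_log_two_mul T]
  have hρle : ∀ k < T, ρ k ≤ min 1 (exp (c * (501 + 500 * A - (T - k)))) := by
    intro k hk
    have hTk : (1 : ℝ) ≤ T - k := by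
      have : (k : ℝ) + 1 ≤ T := by exact_mod_cast hk
      linarith
    have hloglog := log_log_two_mul_le_log_log_two_mul (n := T) hTk
      (by linarith [(k.cast_nonneg : (0 : ℝ) ≤ k)])
    rw [hρ k hk]
    refine min_le_min le_rfl (exp_le_exp.mpr ?_)
    calc -(μ / (8 * L)) * (((T : ℝ) - k - 501) / (2 * d)
          - 250 / d * (log (1 / δ₂) + log (log (2 * ((T : ℝ) - k)))))
        = c * (501 + 500 * (log (1 / δ₂) + log (log (2 * ((T : ℝ) - k)))) - (T - k)) := by
          simp only [c]
          field_simp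
          ring
      _ ≤ c * (501 + 500 * A - (T - k)) := by gcongr; exact add_le_add_right hloglog _
  calc ∑ k ∈ range T, ρ k ≤ ∑ k ∈ range T, min 1 (exp (c * (501 + 500 * A - (T - k)))) :=
        sum_le_sum fun k hk => hρle k (mem_range.mp hk)
    _ = ∑ j ∈ range T, min 1 (exp (c * (501 + 500 * A - (j + 1)))) := by
        rw [← sum_range_reflect
          (fun j : ℕ => min 1 (exp (c * (501 + 500 * A - ((j : ℝ) + 1))))) T]
        refine sum_congr rfl fun k hk => ?_
        have hk := mem_range.mp hk
        rw [Nat.cast_sub (by omega), Nat.cast_sub (by omega)]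
        push_cast
        ring_nf
    _ ≤ 501 + 500 * A + 1 + 1 / c := sum_range_min_one_exp_le hc (by linarith) T
    _ = 502 + 500 * A + 16 * L * d / μ := by
        rw [one_div_div]
        ring

lemma ofReal_one_sub_le_measure_of_compl_subset {Ω : Type*} [MeasurableSpace Ω] {P : Measure Ω}
    [IsProbabilityMeasure P] {E F : Set Ω} (hEF : Eᶜ ⊆ F) {δ : ℝ} (hF : P.real F ≤ δ) :
    ENNReal.ofReal (1 - δ) ≤ P E := by
  have hcover : 1 ≤ P.real E + P.real F :=
    calc 1 = P.real (E ∪ Eᶜ) := by simp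
      _ ≤ P.real E + P.real Eᶜ := measureReal_union_le _ _
      _ ≤ P.real E + P.real F :=
          add_le_add_right (measureReal_mono hEF (measure_ne_top P F)) _
  rw [← ofReal_measureReal (measure_ne_top P E)]
  exact ENNReal.ofReal_le_ofReal (by linarith)

lemma sum_fin_prod_mul_sq_eq_sum_range_mul_norm_sq {d T : ℕ} (ρ : ℕ → ℝ)
    (v : ℕ → EuclideanSpace ℝ (Fin d)) :
    ∑ p : Fin T × Fin d, ρ p.1 * v p.1 p.2 ^ 2 = ∑ k ∈ range T, ρ k * ‖v k‖ ^ 2 := by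
  rw [Fintype.sum_prod_type, ← Fin.sum_univ_eq_sum_range]
  simp [EuclideanSpace.real_norm_sq_eq, mul_sum]

theorem weighted_gaussian_norm_upper_tail_general
    {d : ℕ} (hd : 1 ≤ d)
    {Ω : Type*} [MeasurableSpace Ω] (P : Measure Ω) [IsProbabilityMeasure P]
    (T : ℕ)
    (u : ℕ → Ω → EuclideanSpace ℝ (Fin d))
    (hu_indep : iIndepFun
      (fun p : Fin T × Fin d => fun ω => u (p.1 : ℕ) ω p.2) P)
    (hu_law : ∀ t, t < T → ∀ i, Measure.map (fun ω => u t ω i) P = gaussianReal 0 1)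
    (L μ : ℝ) (hL : 0 < L) (hμ : 0 < μ)
    (δ₂ : ℝ) (hδ₂ : 0 < δ₂) (hδ₂1 : δ₂ < 1)
    (ρ : ℕ → ℝ)
    (hρ : ∀ k, k < T →
      ρ k = min 1 (Real.exp (-(μ / (8 * L)) *
        (((T : ℝ) - k - 501) / (2 * d)
          - 250 / d * (Real.log (1 / δ₂) + Real.log (Real.log (2 * ((T : ℝ) - k))))))))
    (δα : ℝ) (hδα : 0 < δα) (hδα1 : δα < 1) :
    ENNReal.ofReal (1 - δα) ≤
      P {ω | ∑ k ∈ Finset.range T, ρ k * ‖u k ω‖ ^ 2 ≤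
        (d : ℝ) * (1004 + 1000 * (Real.log (1 / δ₂) + Real.log (Real.log (2 * T)))
          + 32 * d * L / μ + 3 * Real.log (1 / δα))} := by
  have hρ01 : ∀ k, k < T → 0 ≤ ρ k ∧ ρ k ≤ 1 := fun k hk => by
    rw [hρ k hk]
    exact ⟨le_min zero_le_one (exp_pos _).le, min_le_left _ _⟩
  have hx : 0 ≤ log (1 / δα) := log_nonneg (one_le_one_div hδα hδα1.le)
  have hd_real : (1 : ℝ) ≤ d := by exact_mod_cast hd
  have htail := measureReal_le_sum_mul_sq_le hu_indep (fun p => hu_law p.1 p.1.2 p.2)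
    (a := fun p => ρ p.1) (fun p => (hρ01 p.1 p.1.2).1) (fun p => (hρ01 p.1 p.1.2).2)
    (log (1 / δα))
  have hmass : ∑ p : Fin T × Fin d, ρ p.1 = d * ∑ k ∈ range T, ρ k := by
    simp [Fintype.sum_prod_type, ← Fin.sum_univ_eq_sum_range ρ, mul_sum]
  have hweights := sum_weights_le hd hL hμ hδ₂ hδ₂1 hρ
  refine ofReal_one_sub_le_measure_of_compl_subset (fun ω hω => ?_)
    (htail.trans_eq (by rw [one_div, log_inv, neg_neg, exp_log hδα]))
  simp only [Set.mem_compl_iff, Set.mem_ofPred_eq, not_le] at hω ⊢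
  have hnorms := sum_fin_prod_mul_sq_eq_sum_range_mul_norm_sq (T := T) ρ (u · ω)
  have hscaled := mul_le_mul_of_nonneg_left hweights (by positivity : (0 : ℝ) ≤ d)
  have hx_le := le_mul_of_one_le_left hx hd_real
  rw [hmass, hnorms]
  linear_combination 2 * hscaled + 3 * hx_le + hω.le

/-- **Upper-tail bound for the weighted accumulated Gaussian norms
(Lemma `alp_term` / stmt 10).**  With the deterministic weights `ρ_k` built from the
suffix lower-tail exponents, the weighted chi-square sum `Σ ρ_k ‖u_k‖²` is bounded with
probability at least `1 − δ_α`. -/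
theorem weighted_gaussian_norm_upper_tail
    {d : ℕ} (hd : 1 ≤ d)
    {Ω : Type*} [MeasurableSpace Ω] (P : Measure Ω) [IsProbabilityMeasure P]
    (T : ℕ)
    (u : ℕ → Ω → EuclideanSpace ℝ (Fin d))
    (hu_meas : ∀ t, Measurable (u t))
    (hu_indep : iIndepFun
      (fun p : Fin T × Fin d => fun ω => u (p.1 : ℕ) ω p.2) P)
    (hu_law : ∀ t, t < T → ∀ i, Measure.map (fun ω => u t ω i) P = gaussianReal 0 1)
    (L μ : ℝ) (hL : 0 < L) (hμ : 0 < μ) (hμL : μ ≤ L)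
    (δ₂ : ℝ) (hδ₂ : 0 < δ₂) (hδ₂1 : δ₂ < 1)
    (ρ : ℕ → ℝ)
    (hρ : ∀ k, k < T →
      ρ k = min 1 (Real.exp (-(μ / (8 * L)) *
        (((T : ℝ) - k - 501) / (2 * d)
          - 250 / d * (Real.log (1 / δ₂) + Real.log (Real.log (2 * ((T : ℝ) - k))))))))
    (δα : ℝ) (hδα : 0 < δα) (hδα1 : δα < 1) :
    ENNReal.ofReal (1 - δα) ≤
      P {ω | ∑ k ∈ Finset.range T, ρ k * ‖u k ω‖ ^ 2 ≤
        (d : ℝ) * (1004 + 1000 * (Real.log (1 / δ₂) + Real.log (Real.log (2 * T)))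
          + 32 * d * L / μ + 3 * Real.log (1 / δα))} :=
  weighted_gaussian_norm_upper_tail_general hd P T u hu_indep hu_law L μ hL hμ δ₂ hδ₂ hδ₂1 ρ hρ δα
    hδα hδα1
end

section
/- Let f: ℝ^d → ℝ be differentiable with L-Lipschitz gradient. Fix x_t ∈ ℝ^d, a nonzero vector u_t ∈ ℝ^d, and α > 0; set η_t = 1/(4L‖u_t‖²), g(x_t) = ((f(x_t + α u_t) − f(x_t − α u_t))/(2α)) u_t, x_{t+1} = x_t − η_t g(x_t), β_t = (f(x_t + α u_t) − f(x_t − α u_t))/(2α) − u_t^⊤ ∇f(x_t), and Δ_{α,t} = (η_t β_t²)/2 + L η_t² β_t² ‖u_t‖². Define ζ_t = (u_t^⊤ ∇f(x_t))² / (‖u_t‖² ‖∇f(x_t)‖²) if ∇f(x_t) ≠ 0 and ζ_t = (u_t^⊤ a_t)²/‖u_t‖² for an arbitrary unit vector a_t otherwise. Then f(x_{t+1}) ≤ f(x_t) − (1/(16L)) ζ_t ‖∇f(x_t)‖² + Δ_{α,t}, and moreover Δ_{α,t} ≤ (Lα²/16)‖u_t‖². -/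
open scoped RealInnerProductSpace

/-!
The gradient being `L`-Lipschitz gives the quadratic upper bound
`f (x + v) ≤ f x + ⟪∇f x, v⟫ + L/2 ‖v‖²`. Applied at `x ± α u` it shows that the two-point
estimate of the directional derivative `⟪u, ∇f x⟫` is off by `β` with `|β| ≤ L α ‖u‖² / 2`;
applied along the step `-η c u`, with `c = ⟪u, ∇f x⟫ + β` and `L η ‖u‖² = 1/4`, it gives a
decrease of `η ⟪u, ∇f x⟫² / 4` up to the error `3/4 η β² = Δ`.
-/

section InnerProductSpace

variable {E : Type*} [NormedAddCommGroup E] [InnerProductSpace ℝ E]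

theorem mul_norm_sq_eq_inner_sq_div {u g : E} {ζ : ℝ}
    (hζ : g ≠ 0 → ζ = ⟪u, g⟫ ^ 2 / (‖u‖ ^ 2 * ‖g‖ ^ 2)) :
    ζ * ‖g‖ ^ 2 = ⟪u, g⟫ ^ 2 / ‖u‖ ^ 2 := by
  by_cases hg : g = 0
  · simp [hg]
  · have : ‖g‖ ≠ 0 := norm_ne_zero_iff.2 hg
    rw [hζ hg]
    field_simp

variable [CompleteSpace E] {f : E → ℝ} {L : ℝ}

theorem hasDerivAt_apply_add_smul {x v : E} {t : ℝ} (hf : DifferentiableAt ℝ f (x + t • v)) :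
    HasDerivAt (fun s : ℝ => f (x + s • v)) ⟪gradient f (x + t • v), v⟫ t := by
  have hline : HasDerivAt (fun s : ℝ => x + s • v) v t := by
    simpa using ((hasDerivAt_id t).smul_const v).const_add x
  simpa [Function.comp_def] using
    (hasGradientAt_iff_hasFDerivAt.1 hf.hasGradientAt).comp_hasDerivAt t hline

theorem abs_sub_sub_inner_gradient_le (hf : Differentiable ℝ f)
    (hlip : ∀ x y, ‖gradient f y - gradient f x‖ ≤ L * ‖y - x‖) (x v : E) :
    |f (x + v) - f x - ⟪gradient f x, v⟫| ≤ L / 2 * ‖v‖ ^ 2 := by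
  set g : ℝ → ℝ := fun t => f (x + t • v) - f x - t * ⟪gradient f x, v⟫
  have hg : ∀ t, HasDerivAt g ⟪gradient f (x + t • v) - gradient f x, v⟫ t := fun t => by
    rw [inner_sub_left]
    exact ((hasDerivAt_apply_add_smul (hf _)).sub_const (f x)).sub
      (by simpa using (hasDerivAt_id t).mul_const ⟪gradient f x, v⟫)
  have hB : ∀ t, HasDerivAt (fun t => L / 2 * ‖v‖ ^ 2 * t ^ 2) (L * ‖v‖ ^ 2 * t) t := fun t =>
    ((hasDerivAt_pow 2 t).const_mul _).congr_deriv (by push_cast; ring)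
  have hbound : ∀ t ∈ Set.Ico (0 : ℝ) 1,
      ‖⟪gradient f (x + t • v) - gradient f x, v⟫‖ ≤ L * ‖v‖ ^ 2 * t := by
    intro t ht
    calc _ ≤ ‖gradient f (x + t • v) - gradient f x‖ * ‖v‖ := norm_inner_le_norm _ _
      _ ≤ L * ‖x + t • v - x‖ * ‖v‖ := by gcongr; exact hlip x _
      _ = L * ‖v‖ ^ 2 * t := by
        rw [add_sub_cancel_left, norm_smul, Real.norm_of_nonneg ht.1]; ring
  simpa [g] using image_norm_le_of_norm_deriv_right_le_deriv_boundary
    (fun t _ => (hg t).continuousAt.continuousWithinAt) (fun t _ => (hg t).hasDerivWithinAt)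
    (by simp [g]) hB hbound (Set.right_mem_Icc.2 zero_le_one)

theorem abs_centralDifference_sub_inner_le (hf : Differentiable ℝ f)
    (hlip : ∀ x y, ‖gradient f y - gradient f x‖ ≤ L * ‖y - x‖) (x u : E) {α : ℝ} (hα : 0 < α) :
    |(f (x + α • u) - f (x - α • u)) / (2 * α) - ⟪u, gradient f x⟫| ≤ L * α * ‖u‖ ^ 2 / 2 := by
  have hplus := abs_sub_sub_inner_gradient_le hf hlip x (α • u)
  have hminus := abs_sub_sub_inner_gradient_le hf hlip x (-(α • u))
  rw [← sub_eq_add_neg, norm_neg, inner_neg_right] at hminus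
  have hsplit : (f (x + α • u) - f (x - α • u)) / (2 * α) - ⟪u, gradient f x⟫
      = ((f (x + α • u) - f x - ⟪gradient f x, α • u⟫)
        - (f (x - α • u) - f x - -⟪gradient f x, α • u⟫)) / (2 * α) := by
    rw [real_inner_smul_right, real_inner_comm]
    field_simp
    ring
  rw [hsplit, abs_div, abs_of_pos (by positivity : (0 : ℝ) < 2 * α), div_le_iff₀ (by positivity)]
  calc _ ≤ _ := abs_sub _ _
    _ ≤ L / 2 * ‖α • u‖ ^ 2 + L / 2 * ‖α • u‖ ^ 2 := add_le_add hplus hminus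
    _ = _ := by rw [norm_smul, Real.norm_of_nonneg hα.le]; ring

theorem apply_sub_smul_smul_le (hf : Differentiable ℝ f)
    (hlip : ∀ x y, ‖gradient f y - gradient f x‖ ≤ L * ‖y - x‖) (x u : E) {η c : ℝ} (hη : 0 ≤ η)
    (hLη : L * η * ‖u‖ ^ 2 = 1 / 4) :
    f (x - η • (c • u)) ≤
      f x - η * ⟪u, gradient f x⟫ ^ 2 / 4 + 3 / 4 * η * (c - ⟪u, gradient f x⟫) ^ 2 := by
  have h := (abs_le.1 (abs_sub_sub_inner_gradient_le hf hlip x (-(η • (c • u))))).2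
  rw [← sub_eq_add_neg, inner_neg_right, norm_neg, real_inner_smul_right, real_inner_smul_right,
    real_inner_comm, norm_smul, norm_smul, Real.norm_eq_abs, Real.norm_eq_abs, mul_pow, mul_pow,
    sq_abs, sq_abs] at h
  have hquad : L / 2 * (η ^ 2 * (c ^ 2 * ‖u‖ ^ 2)) = η * c ^ 2 / 8 := by
    linear_combination η * c ^ 2 / 2 * hLη
  -- the slack is `η (3/8 c² + 1/4 s² + 1/4 (c - s)²)` with `s = ⟪u, ∇f x⟫`
  nlinarith [mul_nonneg hη (sq_nonneg c), mul_nonneg hη (sq_nonneg ⟪u, gradient f x⟫),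
    mul_nonneg hη (sq_nonneg (c - ⟪u, gradient f x⟫))]

end InnerProductSpace

theorem one_step_descent_normalized_general
    {d : ℕ}
    (f : EuclideanSpace ℝ (Fin d) → ℝ) (L : ℝ) (hL : 0 < L)
    (hdiff : Differentiable ℝ f)
    (hlip : ∀ x y, ‖gradient f y - gradient f x‖ ≤ L * ‖y - x‖)
    (xt ut : EuclideanSpace ℝ (Fin d)) (hut : ut ≠ 0)
    (α : ℝ) (hα : 0 < α)
    (ηt : ℝ) (hη : ηt = 1 / (4 * L * ‖ut‖ ^ 2))
    (xt1 : EuclideanSpace ℝ (Fin d))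
    (hx1 : xt1 = xt - ηt • (((f (xt + α • ut) - f (xt - α • ut)) / (2 * α)) • ut))
    (βt : ℝ)
    (hβ : βt = (f (xt + α • ut) - f (xt - α • ut)) / (2 * α) - ⟪ut, gradient f xt⟫)
    (Δαt : ℝ) (hΔ : Δαt = ηt * βt ^ 2 / 2 + L * ηt ^ 2 * βt ^ 2 * ‖ut‖ ^ 2)
    (ζt : ℝ)
    (hζ₁ : gradient f xt ≠ 0 →
      ζt = ⟪ut, gradient f xt⟫ ^ 2 / (‖ut‖ ^ 2 * ‖gradient f xt‖ ^ 2)) :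
    f xt1 ≤ f xt - 1 / (16 * L) * ζt * ‖gradient f xt‖ ^ 2 + Δαt
      ∧ Δαt ≤ L * α ^ 2 / 16 * ‖ut‖ ^ 2 := by
  have hu : ‖ut‖ ≠ 0 := norm_ne_zero_iff.2 hut
  have hη0 : 0 ≤ ηt := by rw [hη]; positivity
  have hLη : L * ηt * ‖ut‖ ^ 2 = 1 / 4 := by rw [hη]; field_simp
  have hΔ' : Δαt = 3 / 4 * ηt * βt ^ 2 := by rw [hΔ]; linear_combination ηt * βt ^ 2 * hLη
  have hζ : 1 / (16 * L) * ζt * ‖gradient f xt‖ ^ 2 = ηt * ⟪ut, gradient f xt⟫ ^ 2 / 4 := by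
    rw [mul_assoc, mul_norm_sq_eq_inner_sq_div hζ₁, hη]
    field_simp
    ring
  have hβle : |βt| ≤ L * α * ‖ut‖ ^ 2 / 2 :=
    hβ ▸ abs_centralDifference_sub_inner_le hdiff hlip xt ut hα
  refine ⟨?_, ?_⟩
  · rw [hx1, hζ, hΔ', hβ]
    exact apply_sub_smul_smul_le hdiff hlip xt ut hη0 hLη
  · have hβsq : βt ^ 2 ≤ (L * α * ‖ut‖ ^ 2 / 2) ^ 2 :=
      sq_le_sq' (abs_le.1 hβle).1 (abs_le.1 hβle).2
    have hscale : 0 ≤ L * α ^ 2 * ‖ut‖ ^ 2 := by positivity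
    calc Δαt ≤ 3 / 4 * ηt * (L * α * ‖ut‖ ^ 2 / 2) ^ 2 := by rw [hΔ']; gcongr
      _ = 3 / 16 * (L * ηt * ‖ut‖ ^ 2) * (L * α ^ 2 * ‖ut‖ ^ 2) := by ring
      _ ≤ L * α ^ 2 / 16 * ‖ut‖ ^ 2 := by rw [hLη]; linarith

/-- **One-step descent with normalized stepsize (Lemma `one_step_convex` / stmt 11).**
With `η_t = 1/(4L‖u_t‖²)`, one step of the two-point zeroth-order update satisfies
`f(x_{t+1}) ≤ f(x_t) − ζ_t‖∇f(x_t)‖²/(16L) + Δ_{α,t}` and `Δ_{α,t} ≤ (Lα²/16)‖u_t‖²`. -/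
theorem one_step_descent_normalized
    {d : ℕ} (hd : 1 ≤ d)
    (f : EuclideanSpace ℝ (Fin d) → ℝ) (L : ℝ) (hL : 0 < L)
    (hdiff : Differentiable ℝ f)
    (hlip : ∀ x y, ‖gradient f y - gradient f x‖ ≤ L * ‖y - x‖)
    (xt ut : EuclideanSpace ℝ (Fin d)) (hut : ut ≠ 0)
    (α : ℝ) (hα : 0 < α)
    (ηt : ℝ) (hη : ηt = 1 / (4 * L * ‖ut‖ ^ 2))
    (xt1 : EuclideanSpace ℝ (Fin d))
    (hx1 : xt1 = xt - ηt • (((f (xt + α • ut) - f (xt - α • ut)) / (2 * α)) • ut))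
    (βt : ℝ)
    (hβ : βt = (f (xt + α • ut) - f (xt - α • ut)) / (2 * α) - ⟪ut, gradient f xt⟫)
    (Δαt : ℝ) (hΔ : Δαt = ηt * βt ^ 2 / 2 + L * ηt ^ 2 * βt ^ 2 * ‖ut‖ ^ 2)
    (a : EuclideanSpace ℝ (Fin d)) (ha : ‖a‖ = 1)
    (ζt : ℝ)
    (hζ₁ : gradient f xt ≠ 0 →
      ζt = ⟪ut, gradient f xt⟫ ^ 2 / (‖ut‖ ^ 2 * ‖gradient f xt‖ ^ 2))
    (hζ₂ : gradient f xt = 0 → ζt = ⟪ut, a⟫ ^ 2 / ‖ut‖ ^ 2) :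
    f xt1 ≤ f xt - 1 / (16 * L) * ζt * ‖gradient f xt‖ ^ 2 + Δαt
      ∧ Δαt ≤ L * α ^ 2 / 16 * ‖ut‖ ^ 2 :=
  one_step_descent_normalized_general f L hL hdiff hlip xt ut hut α hα ηt hη xt1 hx1 βt hβ Δαt hΔ ζt
    hζ₁
end

section
/- Let T ≥ 1 and let h_0, h_1, …, h_T be nonnegative reals satisfying h_{t+1} ≤ h_t − a_t h_t² + ε_t for t = 0, …, T−1, where a_t ≥ 0 and ε_t ≥ 0. Set E = Σ_{t=0}^{T−1} ε_t. Then h_T ≤ 2E + ( 1/(h_0 + E) + (1/4) Σ_{t=0}^{T−1} a_t )^{−1}, with the convention that the inverse term is zero when h_0 + E = 0. -/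
/-!
The potential `M t = h t + Σ_{t ≤ s < T} ε s` absorbs all future errors, so it is nonincreasing and
decreases by at least `a t * h t ^ 2` at each step. If `h T ≤ 2E` there is nothing to prove.
Otherwise `M t ≥ M T = h T > 2E` for every `t ≤ T`, hence `h t ≥ M t - E ≥ M t / 2`, and `M`
satisfies the unperturbed recursion `M (t+1) ≤ M t - (a t / 4) * M t ^ 2`. For such a recursion
the reciprocals grow by at least `a t / 4` per step, which gives `1 / M T ≥ 1 / M 0 + Σ a t / 4`.
-/

open Finset

theorem inv_add_le_inv_of_le_sub_mul_sq {x y c : ℝ} (hy : 0 < y) (hc : 0 ≤ c)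
    (h : y ≤ x - c * x ^ 2) : x⁻¹ + c ≤ y⁻¹ := by
  have hcx : 0 ≤ c * x ^ 2 := by positivity
  have hyx : y ≤ x := by linarith
  have hx : 0 < x := hy.trans_le hyx
  have hgap : c * (x * y) ≤ x - y :=
    calc c * (x * y) ≤ c * x ^ 2 := by gcongr; nlinarith
      _ ≤ x - y := by linarith
  rw [← le_sub_iff_add_le', inv_sub_inv hy.ne' hx.ne', le_div_iff₀ (by positivity)]
  linarith

theorem inv_add_sum_le_inv_of_le_sub_mul_sq {u c : ℕ → ℝ} {T : ℕ}
    (hu : ∀ t ≤ T, 0 < u t) (hc : ∀ t < T, 0 ≤ c t)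
    (hstep : ∀ t < T, u (t + 1) ≤ u t - c t * u t ^ 2) :
    (u 0)⁻¹ + ∑ t ∈ range T, c t ≤ (u T)⁻¹ := by
  induction T with
  | zero => simp
  | succ T ih =>
    have ih' := ih (fun t ht ↦ hu t (by omega)) (fun t ht ↦ hc t (by omega))
      (fun t ht ↦ hstep t (by omega))
    have hlast := inv_add_le_inv_of_le_sub_mul_sq (hu (T + 1) le_rfl) (hc T T.lt_succ_self)
      (hstep T T.lt_succ_self)
    rw [sum_range_succ]
    linarith

namespace PerturbedRecursion

def potential (T : ℕ) (h ε : ℕ → ℝ) (t : ℕ) : ℝ :=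
  h t + ∑ s ∈ Ico t T, ε s

variable {T t : ℕ} {h a ε : ℕ → ℝ}

theorem potential_zero : potential T h ε 0 = h 0 + ∑ s ∈ range T, ε s := by
  rw [potential, range_eq_Ico]

theorem potential_self : potential T h ε T = h T := by
  simp [potential]

theorem potential_succ_le (ht : t < T) (hrec : h (t + 1) ≤ h t - a t * h t ^ 2 + ε t) :
    potential T h ε (t + 1) ≤ potential T h ε t - a t * h t ^ 2 := by
  rw [potential, potential, sum_eq_sum_Ico_succ_bot ht]
  linarith

theorem potential_self_le (ha : ∀ t < T, 0 ≤ a t)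
    (hrec : ∀ t < T, h (t + 1) ≤ h t - a t * h t ^ 2 + ε t) (ht : t ≤ T) :
    potential T h ε T ≤ potential T h ε t := by
  induction ht using Nat.decreasingInduction with
  | self => exact le_rfl
  | of_succ s hs ih =>
    have hdrop : 0 ≤ a s * h s ^ 2 := mul_nonneg (ha s hs) (sq_nonneg _)
    linarith [potential_succ_le hs (hrec s hs)]

theorem sum_Ico_le_sum_range (hε : ∀ t < T, 0 ≤ ε t) :
    ∑ s ∈ Ico t T, ε s ≤ ∑ s ∈ range T, ε s := by
  rw [range_eq_Ico]
  exact sum_le_sum_of_subset_of_nonneg (Ico_subset_Ico_left t.zero_le)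
    fun s hs _ ↦ hε s (mem_Ico.mp hs).2

theorem potential_succ_le_of_two_mul_le (ht : t < T) (hε : ∀ t < T, 0 ≤ ε t) (hat : 0 ≤ a t)
    (hrec : h (t + 1) ≤ h t - a t * h t ^ 2 + ε t)
    (hlarge : 2 * ∑ s ∈ range T, ε s ≤ potential T h ε t) :
    potential T h ε (t + 1) ≤ potential T h ε t - a t / 4 * potential T h ε t ^ 2 := by
  have hhalf : potential T h ε t / 2 ≤ h t := by
    have := sum_Ico_le_sum_range (t := t) hε
    rw [potential] at hlarge ⊢
    linarith
  have hsq : (potential T h ε t / 2) ^ 2 ≤ h t ^ 2 :=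
    pow_le_pow_left₀ (by linarith [sum_nonneg fun s hs ↦ hε s (mem_range.mp hs)]) hhalf 2
  have hdrop : a t / 4 * potential T h ε t ^ 2 ≤ a t * h t ^ 2 := by
    calc a t / 4 * potential T h ε t ^ 2 = a t * (potential T h ε t / 2) ^ 2 := by ring
      _ ≤ a t * h t ^ 2 := by gcongr
  linarith [potential_succ_le ht hrec]

end PerturbedRecursion

open PerturbedRecursion in
theorem perturbed_recursion_general
    (T : ℕ) (h a ε : ℕ → ℝ)
    (hh : ∀ t, t ≤ T → 0 ≤ h t)
    (ha : ∀ t, t < T → 0 ≤ a t)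
    (hε : ∀ t, t < T → 0 ≤ ε t)
    (hrec : ∀ t, t < T → h (t + 1) ≤ h t - a t * h t ^ 2 + ε t) :
    h T ≤ 2 * (∑ t ∈ Finset.range T, ε t) +
      (if h 0 + ∑ t ∈ Finset.range T, ε t = 0 then 0
       else (1 / (h 0 + ∑ t ∈ Finset.range T, ε t)
              + 1 / 4 * ∑ t ∈ Finset.range T, a t)⁻¹) := by
  set E := ∑ t ∈ range T, ε t
  have hE : 0 ≤ E := sum_nonneg fun t ht ↦ hε t (mem_range.mp ht)
  have hA : 0 ≤ ∑ t ∈ range T, a t := sum_nonneg fun t ht ↦ ha t (mem_range.mp ht)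
  have hE0_nonneg : 0 ≤ h 0 + E := add_nonneg (hh 0 T.zero_le) hE
  rcases le_or_gt (h T) (2 * E) with hsmall | hlarge
  · have hinv : 0 ≤ if h 0 + E = 0 then 0 else (1 / (h 0 + E) + 1 / 4 * ∑ t ∈ range T, a t)⁻¹ := by
      split_ifs <;> positivity
    linarith
  have hM : ∀ t ≤ T, 2 * E < potential T h ε t := fun t ht ↦
    (potential_self (h := h) ▸ hlarge).trans_le (potential_self_le ha hrec ht)
  have hreciprocal := inv_add_sum_le_inv_of_le_sub_mul_sq (u := potential T h ε)
    (c := fun t ↦ 1 / 4 * a t) (fun t ht ↦ by linarith [hM t ht]) (fun t ht ↦ by linarith [ha t ht])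
    (fun t ht ↦ by
      simpa only [one_div_mul_eq_div] using
        potential_succ_le_of_two_mul_le ht hε (ha t ht) (hrec t ht) (hM t ht.le).le)
  rw [potential_zero, potential_self, ← mul_sum] at hreciprocal
  have hE0_ne : h 0 + E ≠ 0 := by linarith [potential_zero ▸ hM 0 T.zero_le]
  rw [if_neg hE0_ne, one_div]
  linarith [(le_inv_comm₀ (by positivity) (by linarith)).mp hreciprocal]

/-- **Perturbed convex-rate recursion (stmt 13).**
If nonnegative reals satisfy `h_{t+1} ≤ h_t − a_t h_t² + ε_t` with `a_t, ε_t ≥ 0`, then with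
`E = Σ ε_t`, `h_T ≤ 2E + (1/(h_0+E) + (1/4) Σ a_t)⁻¹`, the inverse term being `0` when
`h_0 + E = 0`. -/
theorem perturbed_recursion
    (T : ℕ) (hT : 1 ≤ T) (h a ε : ℕ → ℝ)
    (hh : ∀ t, t ≤ T → 0 ≤ h t)
    (ha : ∀ t, t < T → 0 ≤ a t)
    (hε : ∀ t, t < T → 0 ≤ ε t)
    (hrec : ∀ t, t < T → h (t + 1) ≤ h t - a t * h t ^ 2 + ε t) :
    h T ≤ 2 * (∑ t ∈ Finset.range T, ε t) +
      (if h 0 + ∑ t ∈ Finset.range T, ε t = 0 then 0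
       else (1 / (h 0 + ∑ t ∈ Finset.range T, ε t)
              + 1 / 4 * ∑ t ∈ Finset.range T, a t)⁻¹) :=
  perturbed_recursion_general T h a ε hh ha hε hrec
end
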